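/- Let F ∈ ℝ[x,y]_d and l a real linear form with l² ∈ (F)^⊥ and 2 ≤ d. Then there exist c_0, c_1 ∈ ℝ with F = c_0 (l_⊥)^d + c_1 l (l_⊥)^{d-1}, where (ax+by)_⊥ := bx - ay. -/

import Mathlib

/-!
Write `D = ∂(l) = a ∂ₓ + b ∂ᵧ` for `l = a x + b y`, so that `l² ∈ (F)^⊥` says `D (D F) = 0`.
On forms of degree `e` the kernel of `D` is spanned by `l_⊥ ^ e` (induction on `e`, via Euler's
identity). Hence `D F = c l_⊥ ^ (d - 1)`, and since `D (l l_⊥ ^ (d - 1)) = (a² + b²) l_⊥ ^ (d - 1)`,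
subtracting `c / (a² + b²) · l l_⊥ ^ (d - 1)` from `F` leaves a form of degree `d` killed by `D`.
-/

open MvPolynomial

/-- The differential operator `∂(f)` applied to `F`: substitute `∂/∂x, ∂/∂y` for the
variables of `f` and act on `F`.  `f ∈ (F)^⊥` iff `diffOp f F = 0`. -/
noncomputable def diffOp {k : Type*} [CommSemiring k]
    (f F : MvPolynomial (Fin 2) k) : MvPolynomial (Fin 2) k :=
  ∑ m ∈ f.support, f.coeff m •
    ((⇑(pderiv (R := k) (0 : Fin 2)))^[m 0] ((⇑(pderiv (R := k) (1 : Fin 2)))^[m 1] F))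


/-- The binary linear form `p.1 * x + p.2 * y`. -/
noncomputable def lin (p : ℝ × ℝ) : MvPolynomial (Fin 2) ℝ :=
  C p.1 * X 0 + C p.2 * X 1

/-- For `l = a x + b y`, the form `l_⊥ = b x - a y`. -/
noncomputable def lperp (p : ℝ × ℝ) : MvPolynomial (Fin 2) ℝ :=
  C p.2 * X 0 - C p.1 * X 1

/-- The commutator of two derivations is a derivation, and `⁅∂ᵢ, ∂ⱼ⁆` kills every variable. -/
theorem pderiv_pderiv_comm {σ R : Type*} [CommRing R] (i j : σ) (f : MvPolynomial σ R) :
    pderiv i (pderiv j f) = pderiv j (pderiv i f) := by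
  classical
  have h : ⁅pderiv i, pderiv j⁆ = (0 : Derivation R (MvPolynomial σ R) (MvPolynomial σ R)) :=
    derivation_ext fun k => by
      rw [Derivation.commutator_apply, pderiv_X, pderiv_X, Pi.single_apply, Pi.single_apply]
      split_ifs <;> simp
  simpa [Derivation.commutator_apply, sub_eq_zero] using congr($h f)

theorem diffOp_eq_linearCombination {k : Type*} [CommSemiring k] (f F : MvPolynomial (Fin 2) k) :
    diffOp f F = Finsupp.linearCombination k
      (fun m : Fin 2 →₀ ℕ => (⇑(pderiv (R := k) 0))^[m 0] ((⇑(pderiv (R := k) 1))^[m 1] F))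
      (AddMonoidAlgebra.coeff f) :=
  rfl

theorem diffOp_add {k : Type*} [CommSemiring k] (f g F : MvPolynomial (Fin 2) k) :
    diffOp (f + g) F = diffOp f F + diffOp g F := by
  simp only [diffOp_eq_linearCombination, AddMonoidAlgebra.coeff_add, map_add]

theorem diffOp_monomial {k : Type*} [CommSemiring k] (m : Fin 2 →₀ ℕ) (c : k)
    (F : MvPolynomial (Fin 2) k) :
    diffOp (monomial m c) F =
      c • (⇑(pderiv (R := k) 0))^[m 0] ((⇑(pderiv (R := k) 1))^[m 1] F) := by
  rw [diffOp_eq_linearCombination, ← single_eq_monomial, AddMonoidAlgebra.coeff_single,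
    Finsupp.linearCombination_single]

/-- `∂(lin p) = p.1 ∂ₓ + p.2 ∂ᵧ`, the operator by which `lin p` acts on forms. -/
noncomputable def dirDeriv (p : ℝ × ℝ) :
    Derivation ℝ (MvPolynomial (Fin 2) ℝ) (MvPolynomial (Fin 2) ℝ) :=
  p.1 • pderiv 0 + p.2 • pderiv 1

theorem dirDeriv_apply (p : ℝ × ℝ) (f : MvPolynomial (Fin 2) ℝ) :
    dirDeriv p f = C p.1 * pderiv 0 f + C p.2 * pderiv 1 f := by
  simp [dirDeriv, smul_eq_C_mul]

theorem lin_sq (p : ℝ × ℝ) : lin p ^ 2 = monomial (Finsupp.single 0 2) (p.1 ^ 2)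
    + monomial (Finsupp.single 0 1 + Finsupp.single 1 1) (2 * p.1 * p.2)
    + monomial (Finsupp.single 1 2) (p.2 ^ 2) := by
  rw [← mul_one (2 * p.1 * p.2), ← monomial_mul,
    ← C_mul_X_pow_eq_monomial, ← C_mul_X_pow_eq_monomial, ← C_mul_X_pow_eq_monomial,
    ← C_mul_X_pow_eq_monomial, lin]
  simp only [map_mul, map_pow, map_ofNat, map_one]
  ring

theorem diffOp_lin_sq (p : ℝ × ℝ) (F : MvPolynomial (Fin 2) ℝ) :
    diffOp (lin p ^ 2) F = dirDeriv p (dirDeriv p F) := by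
  rw [lin_sq, diffOp_add, diffOp_add, diffOp_monomial, diffOp_monomial, diffOp_monomial]
  simp only [Finsupp.single_eq_same, Finsupp.single_eq_of_ne, Finsupp.add_apply, ne_eq,
    one_ne_zero, zero_ne_one, not_false_eq_true, add_zero, zero_add, Function.iterate_zero_apply,
    Function.iterate_succ_apply, smul_eq_C_mul, dirDeriv_apply, map_add,
    pderiv_C_mul, C_mul, C_pow, map_ofNat C 2]
  rw [pderiv_pderiv_comm 1 0]
  ring

theorem dirDeriv_lin (p : ℝ × ℝ) : dirDeriv p (lin p) = C (p.1 ^ 2 + p.2 ^ 2) := by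
  simp [dirDeriv_apply, lin, sq]

theorem dirDeriv_lperp (p : ℝ × ℝ) : dirDeriv p (lperp p) = 0 := by
  simp [dirDeriv_apply, lperp, mul_comm]

theorem dirDeriv_lin_mul_lperp_pow (p : ℝ × ℝ) (n : ℕ) :
    dirDeriv p (lin p * lperp p ^ n) = C (p.1 ^ 2 + p.2 ^ 2) * lperp p ^ n := by
  rw [Derivation.leibniz, Derivation.leibniz_pow, dirDeriv_lperp, dirDeriv_lin]
  simp [smul_eq_mul, mul_comm]

theorem dirDeriv_pderiv_comm (p : ℝ × ℝ) (i : Fin 2) (f : MvPolynomial (Fin 2) ℝ) :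
    dirDeriv p (pderiv i f) = pderiv i (dirDeriv p f) := by
  simp only [dirDeriv_apply, map_add, pderiv_C_mul, pderiv_pderiv_comm i]

theorem isHomogeneous_lin (p : ℝ × ℝ) : (lin p).IsHomogeneous 1 :=
  (isHomogeneous_C_mul_X _ _).add (isHomogeneous_C_mul_X _ _)

theorem isHomogeneous_lperp (p : ℝ × ℝ) : (lperp p).IsHomogeneous 1 :=
  (isHomogeneous_C_mul_X _ _).sub (isHomogeneous_C_mul_X _ _)

theorem MvPolynomial.IsHomogeneous.dirDeriv {F : MvPolynomial (Fin 2) ℝ} {n : ℕ}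
    (hF : F.IsHomogeneous n) (p : ℝ × ℝ) : (dirDeriv p F).IsHomogeneous (n - 1) := by
  rw [dirDeriv_apply]
  exact (hF.pderiv.C_mul _).add (hF.pderiv.C_mul _)

theorem lperp_ne_zero {p : ℝ × ℝ} (hp : p ≠ 0) : lperp p ≠ 0 := by
  intro h
  have h0 := congrArg (eval ![1, 0]) h
  have h1 := congrArg (eval ![0, 1]) h
  simp only [lperp, map_sub, map_mul, eval_C, eval_X, map_zero] at h0 h1
  exact hp (Prod.ext (by simpa using h1) (by simpa using h0))

theorem Prod.fst_ne_zero_or_snd_ne_zero {M N : Type*} [Zero M] [Zero N] {p : M × N}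
    (hp : p ≠ 0) : p.1 ≠ 0 ∨ p.2 ≠ 0 := by
  contrapose! hp
  exact Prod.ext hp.1 hp.2

theorem exists_eq_mul_of_mul_add_mul_eq_zero {K : Type*} [Field K] {a b u v : K}
    (hab : a ≠ 0 ∨ b ≠ 0) (h : a * u + b * v = 0) : ∃ t, u = t * b ∧ v = -(t * a) := by
  rcases hab with ha | hb
  · exact ⟨-v / a, by field_simp; linear_combination h, by field_simp⟩
  · exact ⟨u / b, by field_simp, by field_simp; linear_combination h⟩

/-- Both partials of `G` are again killed by `∂(lin p)`, so by induction they are multiples of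
`lperp p ^ e`; Euler's identity reassembles `G` from them. -/
theorem eq_C_mul_lperp_pow_of_dirDeriv_eq_zero {p : ℝ × ℝ} (hp : p ≠ 0) {e : ℕ}
    {G : MvPolynomial (Fin 2) ℝ} (hG : G.IsHomogeneous e) (hD : dirDeriv p G = 0) :
    ∃ c : ℝ, G = C c * lperp p ^ e := by
  induction e generalizing G with
  | zero =>
    refine ⟨coeff 0 G, ?_⟩
    rwa [pow_zero, mul_one, ← totalDegree_eq_zero_iff_eq_C, totalDegree_zero_iff_isHomogeneous]
  | succ e ih =>
    have hDpderiv (i : Fin 2) : dirDeriv p (pderiv i G) = 0 := by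
      rw [dirDeriv_pderiv_comm, hD, map_zero]
    obtain ⟨cx, hx⟩ := ih hG.pderiv (hDpderiv 0)
    obtain ⟨cy, hy⟩ := ih hG.pderiv (hDpderiv 1)
    have hc : p.1 * cx + p.2 * cy = 0 := by
      rw [dirDeriv_apply, hx, hy, ← mul_assoc, ← mul_assoc, ← map_mul, ← map_mul, ← add_mul,
        ← map_add] at hD
      exact C_eq_zero.mp ((mul_eq_zero.mp hD).resolve_right (pow_ne_zero _ (lperp_ne_zero hp)))
    obtain ⟨t, rfl, rfl⟩ :=
      exists_eq_mul_of_mul_add_mul_eq_zero (Prod.fst_ne_zero_or_snd_ne_zero hp) hc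
    have hEuler : ((e : ℝ) + 1) • G = C t * lperp p ^ (e + 1) := by
      rw [← Nat.cast_succ, Nat.cast_smul_eq_nsmul, ← hG.sum_X_mul_pderiv, Fin.sum_univ_two, hx, hy,
        lperp]
      simp only [map_mul, map_neg]
      ring
    refine ⟨t / (e + 1), ?_⟩
    rw [(eq_inv_smul_iff₀ (by positivity)).mpr hEuler, smul_eq_C_mul, div_eq_inv_mul, map_mul,
      mul_assoc]

theorem stmt_8 {d : ℕ} (hd : 2 ≤ d) (F : MvPolynomial (Fin 2) ℝ) (hF : F.IsHomogeneous d)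
    (p : ℝ × ℝ) (hp : p ≠ 0) (hmem : diffOp ((lin p) ^ 2) F = 0) :
    ∃ c0 c1 : ℝ, F = C c0 * (lperp p) ^ d + C c1 * (lin p * (lperp p) ^ (d - 1)) := by
  have hs : p.1 ^ 2 + p.2 ^ 2 ≠ 0 := by
    rcases Prod.fst_ne_zero_or_snd_ne_zero hp with h | h <;> positivity
  obtain ⟨c, hc⟩ := eq_C_mul_lperp_pow_of_dirDeriv_eq_zero hp (hF.dirDeriv p)
    (by rwa [← diffOp_lin_sq])
  have hM : (lin p * lperp p ^ (d - 1)).IsHomogeneous d := by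
    simpa [Nat.add_sub_cancel' (by omega : 1 ≤ d)] using
      (isHomogeneous_lin p).mul ((isHomogeneous_lperp p).pow (d - 1))
  set a := c / (p.1 ^ 2 + p.2 ^ 2)
  have hker : dirDeriv p (F - C a * (lin p * lperp p ^ (d - 1))) = 0 := by
    rw [map_sub, ← smul_eq_C_mul, Derivation.map_smul, dirDeriv_lin_mul_lperp_pow, hc,
      smul_eq_C_mul, ← mul_assoc, ← map_mul, div_mul_cancel₀ c hs, sub_self]
  obtain ⟨c0, hc0⟩ := eq_C_mul_lperp_pow_of_dirDeriv_eq_zero hp (hF.sub (hM.C_mul a)) hker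
  exact ⟨c0, a, by rw [← hc0]; ring⟩
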